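/- arXiv:2009.04054 — 12 statements merged into one kernel-verified Lean document; each statement's English description precedes it below -/
import Mathlib

section
/- Let a, b, c be complex numbers and let t, t1, t2, t3, t12, t13, t23, t123 be complex numbers (representing the values of a tau function and its lattice shifts). Define A = (a−b)·t12·t3 + (b−c)·t23·t1 + (c−a)·t13·t2, A1 = (b−c)·t123·t + (c+a)·t12·t3 − (a+b)·t13·t2, A2 = (c−a)·t123·t + (a+b)·t23·t1 − (b+c)·t12·t3, A3 = (a−b)·t123·t + (b+c)·t13·t2 − (c+a)·t23·t1, and B = (a−b)(b−c)(c−a)·t123·t + (a−b)(a+c)(b+c)·t12·t3 + (b−c)(b+a)(c+a)·t23·t1 + (c−a)(c+b)(a+b)·t13·t2. Then 3·B = (c−a)(a−b)·A1 + (a−b)(b−c)·A2 + (b−c)(c−a)·A3 + (a²+b²+c²+3ab+3bc+3ca)·A. -/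
theorem stmt0 (a b c t t1 t2 t3 t12 t13 t23 t123 : ℂ) :
    3 * ((a-b)*(b-c)*(c-a)*t123*t + (a-b)*(a+c)*(b+c)*t12*t3
        + (b-c)*(b+a)*(c+a)*t23*t1 + (c-a)*(c+b)*(a+b)*t13*t2)
    = (c-a)*(a-b) * ((b-c)*t123*t + (c+a)*t12*t3 - (a+b)*t13*t2)
    + (a-b)*(b-c) * ((c-a)*t123*t + (a+b)*t23*t1 - (b+c)*t12*t3)
    + (b-c)*(c-a) * ((a-b)*t123*t + (b+c)*t13*t2 - (c+a)*t23*t1)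
    + (a^2+b^2+c^2+3*a*b+3*b*c+3*c*a)
        * ((a-b)*t12*t3 + (b-c)*t23*t1 + (c-a)*t13*t2) := by ring
end

section
/- Let T : ℂ → ℂ → ℂ → ℤ → ℤ → ℤ → ℂ be a family of functions T(a,b,c;n,m,l). Suppose that for all a, b, c ∈ ℂ and all n, m, l ∈ ℤ the discrete AKP equation holds: (a−b)·T(a,b,c;n+1,m+1,l)·T(a,b,c;n,m,l+1) + (b−c)·T(a,b,c;n,m+1,l+1)·T(a,b,c;n+1,m,l) + (c−a)·T(a,b,c;n+1,m,l+1)·T(a,b,c;n,m+1,l) = 0, and suppose the reflection symmetry T(a,b,c;n,m,l) = T(−a,b,c;−n,m,l) holds for all arguments. Then for all a, b, c, n, m, l: (b−c)·T(a,b,c;n+1,m+1,l+1)·T(a,b,c;n,m,l) + (c+a)·T(a,b,c;n+1,m+1,l)·T(a,b,c;n,m,l+1) − (a+b)·T(a,b,c;n+1,m,l+1)·T(a,b,c;n,m+1,l) = 0. -/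
theorem stmt5 (T : ℂ → ℂ → ℂ → ℤ → ℤ → ℤ → ℂ)
    (hAKP : ∀ a b c : ℂ, ∀ n m l : ℤ,
      (a-b) * T a b c (n+1) (m+1) l * T a b c n m (l+1)
      + (b-c) * T a b c n (m+1) (l+1) * T a b c (n+1) m l
      + (c-a) * T a b c (n+1) m (l+1) * T a b c n (m+1) l = 0)
    (hsym : ∀ a b c : ℂ, ∀ n m l : ℤ, T a b c n m l = T (-a) b c (-n) m l) :
    ∀ a b c : ℂ, ∀ n m l : ℤ,
      (b-c) * T a b c (n+1) (m+1) (l+1) * T a b c n m l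
      + (c+a) * T a b c (n+1) (m+1) l * T a b c n m (l+1)
      - (a+b) * T a b c (n+1) m (l+1) * T a b c n (m+1) l = 0 := by
  intro a b c n m l
  have h := hAKP (-a) b c (-(n+1)) m l
  rw [show (-(n+1)+1 : ℤ) = -n by ring] at h
  rw [← hsym a b c n (m+1) l, ← hsym a b c (n+1) m (l+1),
      ← hsym a b c (n+1) (m+1) (l+1), ← hsym a b c n m l,
      ← hsym a b c (n+1) (m+1) l, ← hsym a b c n m (l+1)] at h
  linear_combination h
end

section
/- Let T : ℂ → ℂ → ℂ → ℤ → ℤ → ℤ → ℂ. Suppose that for all a, b, c ∈ ℂ and n, m, l ∈ ℤ: (a−b)·T(a,b,c;n+1,m+1,l)·T(a,b,c;n,m,l+1) + (b−c)·T(a,b,c;n,m+1,l+1)·T(a,b,c;n+1,m,l) + (c−a)·T(a,b,c;n+1,m,l+1)·T(a,b,c;n,m+1,l) = 0, and suppose the three reflection symmetries hold: T(a,b,c;n,m,l) = T(−a,b,c;−n,m,l) = T(a,−b,c;n,−m,l) = T(a,b,−c;n,m,−l). Then T also satisfies the discrete BKP (Miwa) equation: for all a, b, c, n, m, l, (a−b)(b−c)(c−a)·T(n+1,m+1,l+1)·T(n,m,l)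 + (a−b)(a+c)(b+c)·T(n+1,m+1,l)·T(n,m,l+1) + (b−c)(b+a)(c+a)·T(n,m+1,l+1)·T(n+1,m,l) + (c−a)(c+b)(a+b)·T(n+1,m,l+1)·T(n,m+1,l) = 0 (all T evaluated at parameters a,b,c). -/
theorem stmt6 (T : ℂ → ℂ → ℂ → ℤ → ℤ → ℤ → ℂ)
    (hAKP : ∀ a b c : ℂ, ∀ n m l : ℤ,
      (a-b) * T a b c (n+1) (m+1) l * T a b c n m (l+1)
      + (b-c) * T a b c n (m+1) (l+1) * T a b c (n+1) m l
      + (c-a) * T a b c (n+1) m (l+1) * T a b c n (m+1) l = 0)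
    (hsym1 : ∀ a b c : ℂ, ∀ n m l : ℤ, T a b c n m l = T (-a) b c (-n) m l)
    (hsym2 : ∀ a b c : ℂ, ∀ n m l : ℤ, T a b c n m l = T a (-b) c n (-m) l)
    (hsym3 : ∀ a b c : ℂ, ∀ n m l : ℤ, T a b c n m l = T a b (-c) n m (-l)) :
    ∀ a b c : ℂ, ∀ n m l : ℤ,
      (a-b)*(b-c)*(c-a) * T a b c (n+1) (m+1) (l+1) * T a b c n m l
      + (a-b)*(a+c)*(b+c) * T a b c (n+1) (m+1) l * T a b c n m (l+1)
      + (b-c)*(b+a)*(c+a) * T a b c n (m+1) (l+1) * T a b c (n+1) m l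
      + (c-a)*(c+b)*(a+b) * T a b c (n+1) m (l+1) * T a b c n (m+1) l = 0 := by
  intro a b c n m l
  have h0 := hAKP a b c n m l
  have hA := hAKP (-a) b c (-(n+1)) m l
  rw [show (-(n+1)+1 : ℤ) = -n by ring, ← hsym1 a b c n (m+1) l,
    ← hsym1 a b c (n+1) m (l+1), ← hsym1 a b c (n+1) (m+1) (l+1),
    ← hsym1 a b c n m l, ← hsym1 a b c n m (l+1),
    ← hsym1 a b c (n+1) (m+1) l] at hA
  linear_combination (a+b)*(a+c)*h0 + (c-a)*(a-b)*hA
end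

section
/- Let a, b, c be nonzero complex numbers and t, t1, t2, t3, t12, t13, t23, t123 ∈ ℂ. Let B(a,b,c) = (a−b)(b−c)(c−a)·t123·t + (a−b)(a+c)(b+c)·t12·t3 + (b−c)(b+a)(c+a)·t23·t1 + (c−a)(c+b)(a+b)·t13·t2. Then B(1/a, 1/b, 1/c) = −(a·b·c)^(−2) · B(a,b,c). In particular the discrete BKP equation is invariant under the parameter substitution (a,b,c) → (1/a, 1/b, 1/c). -/
set_option maxHeartbeats 4000000

theorem stmt8 (a b c : ℂ) (ha : a ≠ 0) (hb : b ≠ 0) (hc : c ≠ 0)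
    (t t1 t2 t3 t12 t13 t23 t123 : ℂ)
    (B : ℂ → ℂ → ℂ → ℂ)
    (hB : ∀ x y z : ℂ, B x y z =
      (x-y)*(y-z)*(z-x)*t123*t + (x-y)*(x+z)*(y+z)*t12*t3
      + (y-z)*(y+x)*(z+x)*t23*t1 + (z-x)*(z+y)*(x+y)*t13*t2) :
    B (1/a) (1/b) (1/c) = -(a*b*c)^(-2 : ℤ) * B a b c := by
  have habc : ((a*b*c)^2 : ℂ) ≠ 0 :=
    pow_ne_zero _ (mul_ne_zero (mul_ne_zero ha hb) hc)
  rw [hB, hB]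
  rw [show ((a*b*c)^(-2 : ℤ) : ℂ) = ((a*b*c)^2)⁻¹ by
    rw [zpow_neg, show ((2:ℤ)) = ((2:ℕ):ℤ) from rfl, zpow_natCast]]
  apply mul_left_cancel₀ habc
  rw [neg_mul, mul_neg, mul_inv_cancel_left₀ habc]
  have k1 : (a*b*c)^2 * ((1/a-1/b)*(1/b-1/c)*(1/c-1/a)) = -((a-b)*(b-c)*(c-a)) := by
    field_simp; ring
  have k2 : (a*b*c)^2 * ((1/a-1/b)*(1/a+1/c)*(1/b+1/c)) = -((a-b)*(a+c)*(b+c)) := by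
    field_simp; ring
  have k3 : (a*b*c)^2 * ((1/b-1/c)*(1/b+1/a)*(1/c+1/a)) = -((b-c)*(b+a)*(c+a)) := by
    field_simp; ring
  have k4 : (a*b*c)^2 * ((1/c-1/a)*(1/c+1/b)*(1/a+1/b)) = -((c-a)*(c+b)*(a+b)) := by
    field_simp; ring
  linear_combination (t123*t) * k1 + (t12*t3) * k2 + (t23*t1) * k3 + (t13*t2) * k4
end

section
/- Let K, M, M' be N×N complex matrices, a ∈ ℂ, and r, c ∈ ℂ^N column vectors. Suppose (a·I − K)·M' − M·(a·I − K) = r·cᵀ, that a·I − K is invertible, and that I + M is invertible. Then det(I + M') = det(I + M) · (1 − cᵀ·(K − a·I)⁻¹·(I + M)⁻¹·r). -/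
open Matrix

theorem stmt9 (N : ℕ) (K M M' : Matrix (Fin N) (Fin N) ℂ) (a : ℂ)
    (r c : Fin N → ℂ)
    (h : (a • (1 : Matrix (Fin N) (Fin N) ℂ) - K) * M' - M * (a • 1 - K) = vecMulVec r c)
    (hK : IsUnit (a • (1 : Matrix (Fin N) (Fin N) ℂ) - K))
    (hM : IsUnit ((1 : Matrix (Fin N) (Fin N) ℂ) + M)) :
    det (1 + M') = det (1 + M) * (1 - c ⬝ᵥ ((K - a • 1)⁻¹ * (1 + M)⁻¹).mulVec r) := by
  set A : Matrix (Fin N) (Fin N) ℂ := a • 1 - K with hA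
  have hAdet : IsUnit A.det := (isUnit_iff_isUnit_det A).mp hK
  have hMdet : IsUnit ((1 : Matrix (Fin N) (Fin N) ℂ) + M).det :=
    (isUnit_iff_isUnit_det _).mp hM
  have hinv : A * A⁻¹ = 1 := mul_nonsing_inv A hAdet
  have hinv' : A⁻¹ * A = 1 := nonsing_inv_mul A hAdet
  -- K - a•1 = -A and its inverse
  have hnegA : K - a • 1 = -A := by rw [hA]; abel
  have hnegAinv : (-A)⁻¹ = -(A⁻¹) := by
    apply inv_eq_right_inv
    rw [Matrix.neg_mul, Matrix.mul_neg, neg_neg, hinv]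
  -- Key factorization
  have key : A * (1 + M') = ((1 + M) * A + vecMulVec r c) := by
    have := sub_eq_iff_eq_add.mp h
    rw [Matrix.mul_add, Matrix.mul_one, this, Matrix.add_mul, Matrix.one_mul]
    abel
  have h1 : (1 + M') = A⁻¹ * ((1 + M) * A + vecMulVec r c) := by
    rw [← key, ← Matrix.mul_assoc, hinv', Matrix.one_mul]
  have hBdet : IsUnit ((1 + M) * A).det := by
    rw [det_mul]; exact hMdet.mul hAdet
  rw [h1, det_mul, vecMulVec_eq Unit r c,
    det_add_replicateCol_mul_replicateRow hBdet r c]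
  have hBinv : ((1 + M) * A)⁻¹ = A⁻¹ * (1 + M)⁻¹ := Matrix.mul_inv_rev _ _
  rw [hBinv]
  have hdetscalar :
      (1 + replicateRow Unit c * (A⁻¹ * (1 + M)⁻¹) * replicateCol Unit r).det
        = 1 + c ⬝ᵥ (A⁻¹ * (1 + M)⁻¹) *ᵥ r := by
    rw [det_unique, Matrix.add_apply, Matrix.one_apply_eq]
    simp [Matrix.mul_apply, Matrix.replicateRow, Matrix.replicateCol, dotProduct, mulVec,
      Finset.mul_sum, Finset.sum_mul, mul_assoc, mul_comm, mul_left_comm]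
    rw [Finset.sum_comm]
  rw [hdetscalar, hnegA, hnegAinv]
  have : (-(A⁻¹) * (1 + M)⁻¹) *ᵥ r = -((A⁻¹ * (1 + M)⁻¹) *ᵥ r) := by
    rw [Matrix.neg_mul, Matrix.neg_mulVec]
  rw [this, dotProduct_neg, sub_neg_eq_add]
  have hdetA : A.det * A⁻¹.det = 1 := by
    rw [← det_mul, hinv, det_one]
  rw [det_mul]
  linear_combination ((1 : ℂ) + c ⬝ᵥ (A⁻¹ * (1 + M)⁻¹) *ᵥ r) * (1 + M).det * hdetA
end

section
/- Let K, M, M' be N×N complex matrices, a ∈ ℂ, and r, r', c ∈ ℂ^N column vectors. Suppose M'·(a·I + K) − (a·I + K)·M = r'·cᵀ, that a·I + K is invertible, and that I + M' is invertible. Then det(I + M) = det(I + M') · (1 − cᵀ·(a·I + K)⁻¹·(I + M')⁻¹·r'). -/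
open Matrix

lemma mul_vecMulVec' {n : ℕ} (M : Matrix (Fin n) (Fin n) ℂ) (u v : Fin n → ℂ) :
    M * vecMulVec u v = vecMulVec (M.mulVec u) v := by
  ext i j
  simp [Matrix.mul_apply, vecMulVec_apply, Matrix.mulVec, dotProduct,
    Finset.sum_mul, mul_assoc]

lemma det_one_sub_vecMulVec' {n : ℕ} (u v : Fin n → ℂ) :
    det (1 - vecMulVec u v) = 1 - v ⬝ᵥ u := by
  rw [vecMulVec_eq Unit, det_one_sub_mul_comm, det_unique]
  simp [Matrix.replicateRow_mul_replicateCol_apply]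

theorem stmt10 (N : ℕ) (K M M' : Matrix (Fin N) (Fin N) ℂ) (a : ℂ)
    (r r' c : Fin N → ℂ)
    (h : M' * (a • (1 : Matrix (Fin N) (Fin N) ℂ) + K) - (a • 1 + K) * M = vecMulVec r' c)
    (hK : IsUnit (a • (1 : Matrix (Fin N) (Fin N) ℂ) + K))
    (hM' : IsUnit ((1 : Matrix (Fin N) (Fin N) ℂ) + M')) :
    det (1 + M) = det (1 + M') * (1 - c ⬝ᵥ ((a • 1 + K)⁻¹ * (1 + M')⁻¹).mulVec r') := by
  set A : Matrix (Fin N) (Fin N) ℂ := a • 1 + K with hA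
  have key : A * (1 + M) = (1 + M') * A - vecMulVec r' c := by
    have : A * M = M' * A - vecMulVec r' c := by
      rw [← h]; noncomm_ring
    simp only [Matrix.mul_add, Matrix.mul_one, this, Matrix.add_mul, Matrix.one_mul]; abel
  have hfact : (1 + M') * A - vecMulVec r' c
      = (1 + M') * A * (1 - vecMulVec ((A⁻¹ * (1 + M')⁻¹).mulVec r') c) := by
    rw [Matrix.mul_sub, Matrix.mul_one, ← mul_vecMulVec']
    congr 1
    rw [show (1 + M') * A * (A⁻¹ * (1 + M')⁻¹ * vecMulVec r' c)
        = (1 + M') * (A * A⁻¹) * (1 + M')⁻¹ * vecMulVec r' c by noncomm_ring,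
      Matrix.mul_nonsing_inv A (hK.map detMonoidHom), Matrix.mul_one,
      Matrix.mul_nonsing_inv _ (hM'.map detMonoidHom), Matrix.one_mul]
  have hdet := congrArg det key
  rw [det_mul, hfact, det_mul, det_mul, det_one_sub_vecMulVec'] at hdet
  have hAdet : A.det ≠ 0 := (hK.map detMonoidHom).ne_zero
  exact mul_left_cancel₀ hAdet (by rw [hdet]; ring)
end

section
/- Let a, b, c be nonzero complex numbers and γ₁, γ₃ ∈ ℂ. Define x₁(n,m,l) = n/a + m/b + l/c + γ₁ and x₃(n,m,l) = n/a³ + m/b³ + l/c³ + γ₃, and set τ(n,m,l) = x₁(n,m,l)³ − x₃(n,m,l). Then τ satisfies the reflected discrete AKP equation: for all n, m, l ∈ ℤ, (a−b)·τ(n+1,m+1,l+1)·τ(n,m,l) + (b+c)·τ(n+1,m,l+1)·τ(n,m+1,l) − (c+a)·τ(n,m+1,l+1)·τ(n+1,m,l) = 0. -/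
set_option maxHeartbeats 2000000 in
theorem stmt14 (a b c : ℂ) (ha : a ≠ 0) (hb : b ≠ 0) (hc : c ≠ 0) (γ₁ γ₃ : ℂ)
    (x₁ x₃ τ : ℤ → ℤ → ℤ → ℂ)
    (hx1 : ∀ n m l : ℤ, x₁ n m l = n/a + m/b + l/c + γ₁)
    (hx3 : ∀ n m l : ℤ, x₃ n m l = n/a^3 + m/b^3 + l/c^3 + γ₃)
    (hτ : ∀ n m l : ℤ, τ n m l = (x₁ n m l)^3 - x₃ n m l) :
    ∀ n m l : ℤ,
      (a-b) * τ (n+1) (m+1) (l+1) * τ n m l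
      + (b+c) * τ (n+1) m (l+1) * τ n (m+1) l
      - (c+a) * τ n (m+1) (l+1) * τ (n+1) m l = 0 := by
  intro n m l
  simp only [hτ, hx1, hx3]
  push_cast
  field_simp
  ring
end

section
/- Let p, q, a, b, c ∈ ℂ with a, b, c all distinct from p and from q, and let η₀ ∈ ℂ. Define ρ(n,m,l) = η₀ · ((a−q)/(a−p))^n · ((b−q)/(b−p))^m · ((c−q)/(c−p))^l (ℤ-indexed powers) and τ = 1 + ρ. Then τ satisfies the discrete AKP equation: for all n, m, l ∈ ℤ, (a−b)·τ(n+1,m+1,l)·τ(n,m,l+1) + (b−c)·τ(n,m+1,l+1)·τ(n+1,m,l) + (c−a)·τ(n+1,m,l+1)·τ(n,m+1,l) = 0. -/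
theorem stmt15 (p q a b c η₀ : ℂ)
    (hap : a ≠ p) (haq : a ≠ q) (hbp : b ≠ p) (hbq : b ≠ q) (hcp : c ≠ p) (hcq : c ≠ q)
    (ρ τ : ℤ → ℤ → ℤ → ℂ)
    (hρ : ∀ n m l : ℤ, ρ n m l
      = η₀ * ((a-q)/(a-p))^n * ((b-q)/(b-p))^m * ((c-q)/(c-p))^l)
    (hτ : ∀ n m l : ℤ, τ n m l = 1 + ρ n m l) :
    ∀ n m l : ℤ,
      (a-b) * τ (n+1) (m+1) l * τ n m (l+1)
      + (b-c) * τ n (m+1) (l+1) * τ (n+1) m l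
      + (c-a) * τ (n+1) m (l+1) * τ n (m+1) l = 0 := by
  intro n m l
  have hap' : a - p ≠ 0 := sub_ne_zero.mpr hap
  have haq' : a - q ≠ 0 := sub_ne_zero.mpr haq
  have hbp' : b - p ≠ 0 := sub_ne_zero.mpr hbp
  have hbq' : b - q ≠ 0 := sub_ne_zero.mpr hbq
  have hcp' : c - p ≠ 0 := sub_ne_zero.mpr hcp
  have hcq' : c - q ≠ 0 := sub_ne_zero.mpr hcq
  have hα : ((a-q)/(a-p)) ≠ 0 := div_ne_zero haq' hap'
  have hβ : ((b-q)/(b-p)) ≠ 0 := div_ne_zero hbq' hbp'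
  have hγ : ((c-q)/(c-p)) ≠ 0 := div_ne_zero hcq' hcp'
  simp only [hτ, hρ, zpow_add_one₀ hα, zpow_add_one₀ hβ, zpow_add_one₀ hγ]
  set X := ((a-q)/(a-p))^n with hX
  set Y := ((b-q)/(b-p))^m with hY
  set Z := ((c-q)/(c-p))^l with hZ
  field_simp
  ring
end

section
/- Let p, a, b, c ∈ ℂ with a, b, c all distinct from p and from −p, and η₀ ∈ ℂ. Define ρ(n,m,l) = η₀ · ((a+p)/(a−p))^n · ((b+p)/(b−p))^m · ((c+p)/(c−p))^l and τ = 1 + ρ. Then τ satisfies the discrete BKP (Miwa) equation: for all n, m, l ∈ ℤ, (a−b)(b−c)(c−a)·τ(n+1,m+1,l+1)·τ(n,m,l) + (a−b)(a+c)(b+c)·τ(n+1,m+1,l)·τ(n,m,l+1) + (b−c)(b+a)(c+a)·τ(n,m+1,l+1)·τ(n+1,m,l) + (c−a)(c+b)(a+b)·τ(n+1,m,l+1)·τ(n,m+1,l) = 0. -/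
theorem stmt16 (p a b c η₀ : ℂ)
    (hap : a ≠ p) (hap' : a ≠ -p) (hbp : b ≠ p) (hbp' : b ≠ -p)
    (hcp : c ≠ p) (hcp' : c ≠ -p)
    (ρ τ : ℤ → ℤ → ℤ → ℂ)
    (hρ : ∀ n m l : ℤ, ρ n m l
      = η₀ * ((a+p)/(a-p))^n * ((b+p)/(b-p))^m * ((c+p)/(c-p))^l)
    (hτ : ∀ n m l : ℤ, τ n m l = 1 + ρ n m l) :
    ∀ n m l : ℤ,
      (a-b)*(b-c)*(c-a) * τ (n+1) (m+1) (l+1) * τ n m l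
      + (a-b)*(a+c)*(b+c) * τ (n+1) (m+1) l * τ n m (l+1)
      + (b-c)*(b+a)*(c+a) * τ n (m+1) (l+1) * τ (n+1) m l
      + (c-a)*(c+b)*(a+b) * τ (n+1) m (l+1) * τ n (m+1) l = 0 := by
  intro n m l
  have ha1 : a - p ≠ 0 := sub_ne_zero.mpr hap
  have ha2 : a + p ≠ 0 := fun h => hap' (by linear_combination h)
  have hb1 : b - p ≠ 0 := sub_ne_zero.mpr hbp
  have hb2 : b + p ≠ 0 := fun h => hbp' (by linear_combination h)
  have hc1 : c - p ≠ 0 := sub_ne_zero.mpr hcp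
  have hc2 : c + p ≠ 0 := fun h => hcp' (by linear_combination h)
  have hA : ((a+p)/(a-p)) ≠ 0 := div_ne_zero ha2 ha1
  have hB : ((b+p)/(b-p)) ≠ 0 := div_ne_zero hb2 hb1
  have hC : ((c+p)/(c-p)) ≠ 0 := div_ne_zero hc2 hc1
  simp only [hτ, hρ, zpow_add_one₀ hA, zpow_add_one₀ hB, zpow_add_one₀ hC]
  set X := ((a+p)/(a-p))^n
  set Y := ((b+p)/(b-p))^m
  set Z := ((c+p)/(c-p))^l
  field_simp
  ring
end

section
/- Let p, q, a, b, c ∈ ℂ with a, b, c all distinct from p, −p, q, and −q, and let η₀ ∈ ℂ. Define ρ(n,m,l) = η₀ · [((a−p)(a−q))/((a+p)(a+q))]^n · [((b−p)(b−q))/((b+p)(b+q))]^m · [((c−p)(c−q))/((c+p)(c+q))]^l and τ = 1 + ρ. Then τ satisfies the discrete BKP (Miwa) equation: for all n, m, l ∈ ℤ, (a−b)(b−c)(c−a)·τ(n+1,m+1,l+1)·τ(n,m,l) + (a−b)(a+c)(b+c)·τ(n+1,m+1,l)·τ(n,m,l+1) + (b−c)(b+a)(c+a)·τ(n,m+1,l+1)·τ(n+1,m,l)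 + (c−a)(c+b)(a+b)·τ(n+1,m,l+1)·τ(n,m+1,l) = 0. -/
lemma bkp_aux17 (p q a b c r r1 r2 r3 r12 r13 r23 r123 : ℂ)
    (H1 : (a+p)*(a+q) * r1 = (a-p)*(a-q) * r)
    (H2 : (b+p)*(b+q) * r2 = (b-p)*(b-q) * r)
    (H3 : (c+p)*(c+q) * r3 = (c-p)*(c-q) * r)
    (h12 : (a+p)*(a+q)*((b+p)*(b+q)) * r12 = (a-p)*(a-q)*((b-p)*(b-q)) * r)
    (h13 : (a+p)*(a+q)*((c+p)*(c+q)) * r13 = (a-p)*(a-q)*((c-p)*(c-q)) * r)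
    (h23 : (b+p)*(b+q)*((c+p)*(c+q)) * r23 = (b-p)*(b-q)*((c-p)*(c-q)) * r)
    (h123 : (a+p)*(a+q)*((b+p)*(b+q))*((c+p)*(c+q)) * r123
      = (a-p)*(a-q)*((b-p)*(b-q))*((c-p)*(c-q)) * r) :
    (a+p)*(a+q)*((b+p)*(b+q))*((c+p)*(c+q)) *
      ((a-b)*(b-c)*(c-a) * (1+r123) * (1+r)
      + (a-b)*(a+c)*(b+c) * (1+r12) * (1+r3)
      + (b-c)*(b+a)*(c+a) * (1+r23) * (1+r1)
      + (c-a)*(c+b)*(a+b) * (1+r13) * (1+r2)) = 0 := by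
    linear_combination
      (a-b)*(b-c)*(c-a) * (1 + r) * h123
      + (a-b)*(a+c)*(b+c) * ((c+p)*(c+q) * (1 + r3)) * h12
      + (a-b)*(a+c)*(b+c) * ((a+p)*(a+q)*((b+p)*(b+q))
          + (a-p)*(a-q)*((b-p)*(b-q)) * r) * H3
      + (b-c)*(b+a)*(c+a) * ((a+p)*(a+q) * (1 + r1)) * h23
      + (b-c)*(b+a)*(c+a) * ((b+p)*(b+q)*((c+p)*(c+q))
          + (b-p)*(b-q)*((c-p)*(c-q)) * r) * H1
      + (c-a)*(c+b)*(a+b) * ((b+p)*(b+q) * (1 + r2)) * h13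
      + (c-a)*(c+b)*(a+b) * ((a+p)*(a+q)*((c+p)*(c+q))
          + (a-p)*(a-q)*((c-p)*(c-q)) * r) * H2

theorem stmt17 (p q a b c η₀ : ℂ)
    (hap : a ≠ p) (hap' : a ≠ -p) (haq : a ≠ q) (haq' : a ≠ -q)
    (hbp : b ≠ p) (hbp' : b ≠ -p) (hbq : b ≠ q) (hbq' : b ≠ -q)
    (hcp : c ≠ p) (hcp' : c ≠ -p) (hcq : c ≠ q) (hcq' : c ≠ -q)
    (ρ τ : ℤ → ℤ → ℤ → ℂ)
    (hρ : ∀ n m l : ℤ, ρ n m l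
      = η₀ * (((a-p)*(a-q))/((a+p)*(a+q)))^n * (((b-p)*(b-q))/((b+p)*(b+q)))^m
          * (((c-p)*(c-q))/((c+p)*(c+q)))^l)
    (hτ : ∀ n m l : ℤ, τ n m l = 1 + ρ n m l) :
    ∀ n m l : ℤ,
      (a-b)*(b-c)*(c-a) * τ (n+1) (m+1) (l+1) * τ n m l
      + (a-b)*(a+c)*(b+c) * τ (n+1) (m+1) l * τ n m (l+1)
      + (b-c)*(b+a)*(c+a) * τ n (m+1) (l+1) * τ (n+1) m l
      + (c-a)*(c+b)*(a+b) * τ (n+1) m (l+1) * τ n (m+1) l = 0 := by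
  have hap0 : a + p ≠ 0 := fun h => hap' (by linear_combination h)
  have haq0 : a + q ≠ 0 := fun h => haq' (by linear_combination h)
  have hbp0 : b + p ≠ 0 := fun h => hbp' (by linear_combination h)
  have hbq0 : b + q ≠ 0 := fun h => hbq' (by linear_combination h)
  have hcp0 : c + p ≠ 0 := fun h => hcp' (by linear_combination h)
  have hcq0 : c + q ≠ 0 := fun h => hcq' (by linear_combination h)
  have hX : (((a-p)*(a-q))/((a+p)*(a+q))) ≠ 0 :=
    div_ne_zero (mul_ne_zero (sub_ne_zero.mpr hap) (sub_ne_zero.mpr haq))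
      (mul_ne_zero hap0 haq0)
  have hY : (((b-p)*(b-q))/((b+p)*(b+q))) ≠ 0 :=
    div_ne_zero (mul_ne_zero (sub_ne_zero.mpr hbp) (sub_ne_zero.mpr hbq))
      (mul_ne_zero hbp0 hbq0)
  have hZ : (((c-p)*(c-q))/((c+p)*(c+q))) ≠ 0 :=
    div_ne_zero (mul_ne_zero (sub_ne_zero.mpr hcp) (sub_ne_zero.mpr hcq))
      (mul_ne_zero hcp0 hcq0)
  have ea : (((a-p)*(a-q))/((a+p)*(a+q))) * ((a+p)*(a+q)) = (a-p)*(a-q) :=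
    div_mul_cancel₀ _ (mul_ne_zero hap0 haq0)
  have eb : (((b-p)*(b-q))/((b+p)*(b+q))) * ((b+p)*(b+q)) = (b-p)*(b-q) :=
    div_mul_cancel₀ _ (mul_ne_zero hbp0 hbq0)
  have ec : (((c-p)*(c-q))/((c+p)*(c+q))) * ((c+p)*(c+q)) = (c-p)*(c-q) :=
    div_mul_cancel₀ _ (mul_ne_zero hcp0 hcq0)
  have H1 : ∀ n m l : ℤ, (a+p)*(a+q) * ρ (n+1) m l = (a-p)*(a-q) * ρ n m l := by
    intro n m l
    rw [hρ, hρ, zpow_add_one₀ hX]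
    linear_combination (η₀ * (((a-p)*(a-q))/((a+p)*(a+q)))^n
      * (((b-p)*(b-q))/((b+p)*(b+q)))^m * (((c-p)*(c-q))/((c+p)*(c+q)))^l) * ea
  have H2 : ∀ n m l : ℤ, (b+p)*(b+q) * ρ n (m+1) l = (b-p)*(b-q) * ρ n m l := by
    intro n m l
    rw [hρ, hρ, zpow_add_one₀ hY]
    linear_combination (η₀ * (((a-p)*(a-q))/((a+p)*(a+q)))^n
      * (((b-p)*(b-q))/((b+p)*(b+q)))^m * (((c-p)*(c-q))/((c+p)*(c+q)))^l) * eb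
  have H3 : ∀ n m l : ℤ, (c+p)*(c+q) * ρ n m (l+1) = (c-p)*(c-q) * ρ n m l := by
    intro n m l
    rw [hρ, hρ, zpow_add_one₀ hZ]
    linear_combination (η₀ * (((a-p)*(a-q))/((a+p)*(a+q)))^n
      * (((b-p)*(b-q))/((b+p)*(b+q)))^m * (((c-p)*(c-q))/((c+p)*(c+q)))^l) * ec
  intro n m l
  have h12 : (a+p)*(a+q)*((b+p)*(b+q)) * ρ (n+1) (m+1) l
      = (a-p)*(a-q)*((b-p)*(b-q)) * ρ n m l := by
    linear_combination ((b+p)*(b+q)) * H1 n (m+1) l + ((a-p)*(a-q)) * H2 n m l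
  have h13 : (a+p)*(a+q)*((c+p)*(c+q)) * ρ (n+1) m (l+1)
      = (a-p)*(a-q)*((c-p)*(c-q)) * ρ n m l := by
    linear_combination ((c+p)*(c+q)) * H1 n m (l+1) + ((a-p)*(a-q)) * H3 n m l
  have h23 : (b+p)*(b+q)*((c+p)*(c+q)) * ρ n (m+1) (l+1)
      = (b-p)*(b-q)*((c-p)*(c-q)) * ρ n m l := by
    linear_combination ((c+p)*(c+q)) * H2 n m (l+1) + ((b-p)*(b-q)) * H3 n m l
  have h123 : (a+p)*(a+q)*((b+p)*(b+q))*((c+p)*(c+q)) * ρ (n+1) (m+1) (l+1)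
      = (a-p)*(a-q)*((b-p)*(b-q))*((c-p)*(c-q)) * ρ n m l := by
    linear_combination ((b+p)*(b+q))*((c+p)*(c+q)) * H1 n (m+1) (l+1)
      + ((a-p)*(a-q))*((c+p)*(c+q)) * H2 n m (l+1)
      + ((a-p)*(a-q))*((b-p)*(b-q)) * H3 n m l
  have hD : (a+p)*(a+q)*((b+p)*(b+q))*((c+p)*(c+q)) ≠ 0 :=
    mul_ne_zero (mul_ne_zero (mul_ne_zero hap0 haq0) (mul_ne_zero hbp0 hbq0))
      (mul_ne_zero hcp0 hcq0)
  have H := bkp_aux17 p q a b c (ρ n m l) (ρ (n+1) m l) (ρ n (m+1) l) (ρ n m (l+1))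
    (ρ (n+1) (m+1) l) (ρ (n+1) m (l+1)) (ρ n (m+1) (l+1)) (ρ (n+1) (m+1) (l+1))
    (H1 n m l) (H2 n m l) (H3 n m l) h12 h13 h23 h123
  simp only [hτ]
  exact (mul_eq_zero.mp H).resolve_left hD
end

section
/- Let σ : ℂ → ℂ be an odd function (σ(−z) = −σ(z) for all z) satisfying the three-term identity σ(x+y)σ(x−y)σ(u+v)σ(u−v) = σ(x+u)σ(x−u)σ(y+v)σ(y−v) − σ(x+v)σ(x−v)σ(y+u)σ(y−u) for all x, y, u, v ∈ ℂ. Then for all a, b, c, ξ ∈ ℂ: σ(c)σ(a−b)σ(ξ+a+b)σ(ξ+c) + σ(a)σ(b−c)σ(ξ+b+c)σ(ξ+a) + σ(b)σ(c−a)σ(ξ+c+a)σ(ξ+b) = 0. -/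
theorem stmt18 (σ : ℂ → ℂ)
    (hodd : ∀ z : ℂ, σ (-z) = -σ z)
    (hid : ∀ x y u v : ℂ,
      σ (x+y) * σ (x-y) * σ (u+v) * σ (u-v)
      = σ (x+u) * σ (x-u) * σ (y+v) * σ (y-v)
        - σ (x+v) * σ (x-v) * σ (y+u) * σ (y-u)) :
    ∀ a b c ξ : ℂ,
      σ c * σ (a-b) * σ (ξ+a+b) * σ (ξ+c)
      + σ a * σ (b-c) * σ (ξ+b+c) * σ (ξ+a)
      + σ b * σ (c-a) * σ (ξ+c+a) * σ (ξ+b) = 0 := by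
  intro a b c ξ
  have h := hid ((a-b+c)/2) ((c-a+b)/2) (ξ+(a+b+c)/2) ((a+b-c)/2)
  have h1 := hodd (ξ+b)
  have h2 := hodd (b-c)
  have h3 := hodd (ξ+a)
  have e1 : (a-b+c)/2 + (c-a+b)/2 = c := by ring
  have e2 : (a-b+c)/2 - (c-a+b)/2 = a-b := by ring
  have e3 : (ξ+(a+b+c)/2) + (a+b-c)/2 = ξ+a+b := by ring
  have e4 : (ξ+(a+b+c)/2) - (a+b-c)/2 = ξ+c := by ring
  have e5 : (a-b+c)/2 + (ξ+(a+b+c)/2) = ξ+c+a := by ring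
  have e6 : (a-b+c)/2 - (ξ+(a+b+c)/2) = -(ξ+b) := by ring
  have e7 : (c-a+b)/2 + (a+b-c)/2 = b := by ring
  have e8 : (c-a+b)/2 - (a+b-c)/2 = c-a := by ring
  have e9 : (a-b+c)/2 + (a+b-c)/2 = a := by ring
  have e10 : (a-b+c)/2 - (a+b-c)/2 = -(b-c) := by ring
  have e11 : (c-a+b)/2 + (ξ+(a+b+c)/2) = ξ+b+c := by ring
  have e12 : (c-a+b)/2 - (ξ+(a+b+c)/2) = -(ξ+a) := by ring
  rw [e1, e2, e3, e4, e5, e6, e7, e8, e9, e10, e11, e12, h1, h2, h3] at h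
  linear_combination h
end

section
/- Let pa, pb, pc, Pab, Pbc, Pca, Qab, Qbc, Qca and t, t1, t2, t3, t12, t13, t23, t123 be complex numbers satisfying Pab·Qab = pa − pb, Pbc·Qbc = pb − pc, and Pca·Qca = pc − pa. Define E0 = Qab·t12·t3 + Qbc·t23·t1 + Qca·t13·t2, E1 = Qbc·t123·t + Pca·t12·t3 − Pab·t13·t2, E2 = Qca·t123·t + Pab·t23·t1 − Pbc·t12·t3, E3 = Qab·t123·t + Pbc·t13·t2 − Pca·t23·t1, and F = Qab·Qbc·Qca·t123·t + Qab·pc·t12·t3 + Qbc·pa·t23·t1 + Qca·pb·t13·t2. Then 3·F = Qca·Qab·E1 + Qab·Qbc·E2 + Qbc·Qca·E3 + (pa + pb + pc)·E0. -/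
theorem stmt19 (pa pb pc Pab Pbc Pca Qab Qbc Qca t t1 t2 t3 t12 t13 t23 t123 : ℂ)
    (hab : Pab * Qab = pa - pb) (hbc : Pbc * Qbc = pb - pc) (hca : Pca * Qca = pc - pa) :
    3 * (Qab*Qbc*Qca*t123*t + Qab*pc*t12*t3 + Qbc*pa*t23*t1 + Qca*pb*t13*t2)
    = Qca*Qab * (Qbc*t123*t + Pca*t12*t3 - Pab*t13*t2)
    + Qab*Qbc * (Qca*t123*t + Pab*t23*t1 - Pbc*t12*t3)
    + Qbc*Qca * (Qab*t123*t + Pbc*t13*t2 - Pca*t23*t1)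
    + (pa + pb + pc) * (Qab*t12*t3 + Qbc*t23*t1 + Qca*t13*t2) := by
  linear_combination (Qca*t13*t2 - Qbc*t23*t1) * hab + (Qab*t12*t3 - Qca*t13*t2) * hbc + (Qbc*t23*t1 - Qab*t12*t3) * hca
end
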